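/- Let A = A_1 × A_2 act on a space X with A_1 acting trivially, and suppose the equivariant cohomology satisfies the Künneth isomorphism E*_A(X) ≅ E*_{A_1}(pt) ⊗_{E⁰} E*_{A_2}(X). Let 𝓔 = ⊕_{χ} 𝓔_χ ⊗ V_χ be an A-equivariant vector bundle on X decomposed along irreducible A_1-characters χ, and assume that for every χ with 𝓔_χ ≠ 0, χ is nontrivial. If X is a single point, then the A-equivariant Euler class e(𝓔) ∈ E*_A(pt) becomes invertible after localizing at the multiplicative set S generated by {c_1^{A_1}(V) : V nontrivial irreducible A_1-representation} (base-changed to the HKR field L). -/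
import Mathlib


/-- (Step 1 of Proposition `lem:lambda_invertible`: the case of a
point.)  Let `R` model the localized equivariant coefficient ring
`E*_{A₁×A₂}(pt) ⊗ E_loc`, complete with respect to an ideal `m` of Chern classes
(formalized: `m` is contained in the Jacobson radical).  An `A = A₁ × A₂`-equivariant
bundle `𝓔` over a point decomposes into characters `χ_s ⊗ ψ_s` (`s = 1, …, r`) with
every `A₁`-character `χ_s` nontrivial, and its Euler class is
`e(𝓔) = ∏_s c₁(χ_s ⊗ ψ_s)`.  Assume the localization inverts the first Chern classes
of the nontrivial `A₁`-characters, and that by the formal group law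
`c₁(χ ⊗ ψ) = c₁(χ) + c₁(ψ) + h.o.t.` with `c₁(ψ)` and the higher order terms in `m`.
Then multiplication by `e(𝓔)` is invertible, i.e. `e(𝓔)` is a unit of `R`. -/
theorem stmt17 {R : Type*} [CommRing R] (m : Ideal R)
    (hm : m ≤ Ideal.jacobson ⊥)
    {A₁ A₂ : Type*} [CommGroup A₁] [Finite A₁] [CommGroup A₂] [Finite A₂]
    (r : ℕ) (χ : Fin r → (A₁ →* ℂˣ)) (ψ : Fin r → (A₂ →* ℂˣ))
    (c1A : (A₁ →* ℂˣ) → R) (c1B : (A₂ →* ℂˣ) → R)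
    (c1 : (A₁ →* ℂˣ) → (A₂ →* ℂˣ) → R)
    (hnontriv : ∀ s, χ s ≠ 1)
    (hS : ∀ f : A₁ →* ℂˣ, f ≠ 1 → IsUnit (c1A f))
    (hFGL : ∀ (f : A₁ →* ℂˣ) (g : A₂ →* ℂˣ),
      c1 f g - c1A f - c1B g ∈ m ∧ c1B g ∈ m)
    (e : R) (he : e = ∏ s : Fin r, c1 (χ s) (ψ s)) :
    IsUnit e := by
  subst he
  refine Finset.univ.prod_induction _ IsUnit (fun _ _ => IsUnit.mul) isUnit_one (fun s _ => ?_)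
  obtain ⟨u, hu⟩ := hS (χ s) (hnontriv s)
  have hmem : c1 (χ s) (ψ s) - c1A (χ s) ∈ m := by
    have h := hFGL (χ s) (ψ s)
    have := m.add_mem h.1 h.2
    simpa [sub_add] using this
  have hx : c1 (χ s) (ψ s) - c1A (χ s) ∈ Ideal.jacobson (⊥ : Ideal R) := hm hmem
  have := Ideal.mem_jacobson_bot.1 hx (↑u⁻¹)
  have h2 : IsUnit ((c1 (χ s) (ψ s) - c1A (χ s)) * ↑u⁻¹ + 1) := this
  have h3 := h2.mul (u.isUnit)
  have : ((c1 (χ s) (ψ s) - c1A (χ s)) * ↑u⁻¹ + 1) * ↑u = c1 (χ s) (ψ s) := by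
    rw [add_mul, mul_assoc, Units.inv_mul, mul_one, one_mul, hu, sub_add_cancel]
  rwa [this] at h3
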